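/- arXiv:math/0006218 — 2 statements merged into one kernel-verified Lean document; each statement's English description precedes it below -/
import Mathlib

section
/- Let T be a linear operator on a Hilbert space H with core 𝒞, and let (T_n) be a sequence of operators such that each f ∈ 𝒞 lies in D(T_n) for all sufficiently large n and ‖T_n f - T f‖ → 0. Define σ_a(T) = {λ ∈ ℂ : there exist unit vectors x_n ∈ D(T) with ‖(λI - T)x_n‖ → 0}, and σ({T_n}) = {λ ∈ ℂ : ‖(λI - T_n)^{-1}‖ → +∞}. Then σ_a(T) ⊆ σ({T_n}). -/
open Filter Topology

/-- `S` is a bounded (everywhere-defined) inverse of the operator `λI - T`, where `T` is a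
possibly unbounded operator given as a `LinearPMap`. -/
def IsResolventOf {H : Type*} [NormedAddCommGroup H] [InnerProductSpace ℂ H]
    (S : H →L[ℂ] H) (T : H →ₗ.[ℂ] H) (lam : ℂ) : Prop :=
  (∀ x : T.domain, S (lam • (x : H) - T x) = x) ∧
  (∀ y : H, ∃ hy : S y ∈ T.domain, lam • (S y) - T ⟨S y, hy⟩ = y)

/-- Theorem 4.5: if `𝒞` is a core of `T`, each `f ∈ 𝒞` is eventually in the domain of `Tₙ`
with `‖Tₙf - Tf‖ → 0`, then the approximate point spectrum of `T` is contained in the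
spectrum of the sequence `(Tₙ)`, i.e. in `{λ : ‖(λI - Tₙ)⁻¹‖ → +∞}` (with the convention
that the resolvent norm is `+∞` when `λI - Tₙ` is not boundedly invertible). -/
theorem approx_point_spectrum_subset_spectrum_of_sequence
    {H : Type*} [NormedAddCommGroup H] [InnerProductSpace ℂ H] [CompleteSpace H]
    (T : H →ₗ.[ℂ] H) (Tn : ℕ → H →ₗ.[ℂ] H)
    (C : Set H) (hC : C ⊆ (T.domain : Set H))
    (hcore : ∀ x : T.domain, ∀ ε > 0, ∃ y, ∃ hy : y ∈ C,
      ‖(x : H) - y‖ < ε ∧ ‖T x - T ⟨y, hC hy⟩‖ < ε)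
    (hconv : ∀ f, ∀ hf : f ∈ C, ∀ ε > 0, ∀ᶠ n in atTop,
      ∃ hfn : f ∈ (Tn n).domain, ‖Tn n ⟨f, hfn⟩ - T ⟨f, hC hf⟩‖ < ε)
    (lam : ℂ)
    (hlam : ∃ x : ℕ → T.domain, (∀ k, ‖(x k : H)‖ = 1) ∧
      Tendsto (fun k => ‖lam • (x k : H) - T (x k)‖) atTop (𝓝 0)) :
    ∀ M > 0, ∀ᶠ n in atTop, ¬ ∃ S : H →L[ℂ] H, ‖S‖ ≤ M ∧ IsResolventOf S (Tn n) lam := by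
  intro M hM
  set δ : ℝ := 1 / (2 * (M * (‖lam‖ + 3) + 1)) with hδdef
  have hδpos : 0 < δ := by positivity
  have hδhalf : δ * (M * (‖lam‖ + 3) + 1) = 1 / 2 := by
    rw [hδdef]; field_simp
  obtain ⟨x, hx1, hx2⟩ := hlam
  obtain ⟨k, hk⟩ := (Metric.tendsto_atTop.mp hx2 δ hδpos)
  have hk' : ‖lam • (x k : H) - T (x k)‖ < δ := by
    have := hk k le_rfl
    rwa [Real.dist_eq, sub_zero, abs_of_nonneg (norm_nonneg _)] at this
  obtain ⟨y, hy, hxy, hTxy⟩ := hcore (x k) δ hδpos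
  filter_upwards [hconv y hy δ hδpos] with n hn
  obtain ⟨hfn, hTn⟩ := hn
  rintro ⟨S, hS, hres1, -⟩
  have heq : S (lam • y - Tn n ⟨y, hfn⟩) = y := hres1 ⟨y, hfn⟩
  have hnormy : (1 : ℝ) - δ ≤ ‖y‖ := by
    have h1 := norm_sub_norm_le ((x k : H)) y
    have := hx1 k
    linarith
  have hbound : ‖lam • y - Tn n ⟨y, hfn⟩‖ ≤ (‖lam‖ + 3) * δ := by
    have hdecomp : lam • y - Tn n ⟨y, hfn⟩ =
        (lam • y - lam • (x k : H)) + (lam • (x k : H) - T (x k)) +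
        (T (x k) - T ⟨y, hC hy⟩) + (T ⟨y, hC hy⟩ - Tn n ⟨y, hfn⟩) := by
      abel
    have h1 : ‖lam • y - lam • (x k : H)‖ ≤ ‖lam‖ * δ := by
      rw [← smul_sub, norm_smul, ← norm_sub_rev (x k : H) y]
      exact mul_le_mul_of_nonneg_left hxy.le (norm_nonneg _)
    have h4 : ‖T ⟨y, hC hy⟩ - Tn n ⟨y, hfn⟩‖ = ‖Tn n ⟨y, hfn⟩ - T ⟨y, hC hy⟩‖ :=
      norm_sub_rev _ _
    calc ‖lam • y - Tn n ⟨y, hfn⟩‖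
        ≤ ‖lam • y - lam • (x k : H)‖ + ‖lam • (x k : H) - T (x k)‖ +
          ‖T (x k) - T ⟨y, hC hy⟩‖ + ‖T ⟨y, hC hy⟩ - Tn n ⟨y, hfn⟩‖ := by
          rw [hdecomp]
          exact le_trans (norm_add_le _ _) (add_le_add_left (le_trans (norm_add_le _ _)
            (add_le_add_left (norm_add_le _ _) _)) _)
      _ ≤ (‖lam‖ + 3) * δ := by rw [h4]; nlinarith [hk', hTxy, hTn, h1]
  have hfin : ‖y‖ ≤ M * ((‖lam‖ + 3) * δ) := by
    calc ‖y‖ = ‖S (lam • y - Tn n ⟨y, hfn⟩)‖ := by rw [heq]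
      _ ≤ ‖S‖ * ‖lam • y - Tn n ⟨y, hfn⟩‖ := S.le_opNorm _
      _ ≤ M * ((‖lam‖ + 3) * δ) := by
          exact mul_le_mul hS hbound (norm_nonneg _) (le_of_lt hM)
  nlinarith [hfin, hnormy, hδhalf]
end

section
/- Let m, ℓ, m_n, ℓ_n be meromorphic functions on a neighbourhood of a closed disc around μ with m·ℓ = -1 and m_n·ℓ_n = -1, suppose m is holomorphic at μ (no pole), and suppose m_n → m and ℓ_n → ℓ uniformly on every sufficiently small compact annulus surrounding μ. If for arbitrarily large n the function m_n has a pole inside some arbitrarily small circle Γ around μ, then ℓ_n also has a pole inside Γ for those n; i.e., poles of m_n accumulating at a non-pole μ of m force poles of ℓ_n accumulating at μ. -/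
open Complex Filter Metric Set Topology
open scoped Classical

/-- The order of a pole of `f` at `z` (0 if `f` is not meromorphic at `z` or has no pole there). -/
noncomputable def poleOrder (f : ℂ → ℂ) (z : ℂ) : ℕ :=
  if h : MeromorphicAt f z then (-(WithTop.untopD 0 (meromorphicOrderAt f z))).toNat else 0

/-- The number of poles of `f` in the set `s`, counted with multiplicity. -/
noncomputable def poleCount (f : ℂ → ℂ) (s : Set ℂ) : ℕ :=
  ∑ᶠ z ∈ s, poleOrder f z

/-- A set avoided by punctured neighbourhoods of all points of `Uo` meets a compact subset of
`Uo` in a finite set. -/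
lemma finite_inter_of_punctured_avoid {S Uo : Set ℂ}
    (h : ∀ z ∈ Uo, ∀ᶠ w in 𝓝[≠] z, w ∉ S) {K : Set ℂ} (hK : IsCompact K) (hKU : K ⊆ Uo) :
    (S ∩ K).Finite := by
  have hV : ∀ z ∈ K, {w | w ≠ z → w ∉ S} ∈ 𝓝 z := by
    intro z hz
    have := h z (hKU hz)
    rwa [eventually_nhdsWithin_iff] at this
  obtain ⟨t, ht⟩ := hK.elim_nhds_subcover' (fun z _ => {w | w ≠ z → w ∉ S}) hV
  refine (Set.Finite.image (Subtype.val) t.finite_toSet).subset ?_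
  rintro x ⟨hxS, hxK⟩
  have := ht hxK
  simp only [Set.mem_iUnion] at this
  obtain ⟨z, hz, hxz⟩ := this
  rcases eq_or_ne x (z : ℂ) with heq | hne
  · exact ⟨z, hz, heq.symm⟩
  · exact absurd hxS (hxz hne)

lemma poleOrder_eq_zero_of_order_nonneg {f : ℂ → ℂ} {z : ℂ} (hf : MeromorphicAt f z)
    (h : 0 ≤ WithTop.untopD 0 (meromorphicOrderAt f z)) : poleOrder f z = 0 := by
  simp only [poleOrder, dif_pos hf]
  rw [Int.toNat_eq_zero]
  omega

lemma poleOrder_eq_zero_of_analyticAt {f : ℂ → ℂ} {z : ℂ} (hf : AnalyticAt ℂ f z) :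
    poleOrder f z = 0 := by
  apply poleOrder_eq_zero_of_order_nonneg hf.meromorphicAt
  rw [hf.meromorphicOrderAt_eq]
  rcases eq_or_ne (analyticOrderAt f z) ⊤ with ht | ht
  · rw [ht, ENat.map_top, WithTop.untopD_top]
  · obtain ⟨n, hn⟩ := ENat.ne_top_iff_exists.mp ht
    rw [← hn, ENat.map_natCast, WithTop.untopD_coe]
    positivity

lemma order_neg_int_of_poleOrder_pos {f : ℂ → ℂ} {z : ℂ} (hf : MeromorphicAt f z)
    (h : 1 ≤ poleOrder f z) : ∃ k : ℕ, 1 ≤ k ∧ meromorphicOrderAt f z = ((-(k : ℤ) : ℤ) : WithTop ℤ) := by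
  simp only [poleOrder, dif_pos hf] at h
  rcases eq_or_ne (meromorphicOrderAt f z) ⊤ with ht | ht
  · rw [ht] at h; simp [WithTop.untopD_top] at h
  · obtain ⟨v, hv⟩ := WithTop.ne_top_iff_exists.mp ht
    rw [← hv] at h ⊢
    rw [WithTop.untopD_coe] at h
    refine ⟨(-v).toNat, by omega, ?_⟩
    rw [WithTop.coe_inj]
    omega

lemma poleOrder_pos_of_order_neg {f : ℂ → ℂ} {z : ℂ} (hf : MeromorphicAt f z) {k : ℕ}
    (hk : 1 ≤ k) (h : meromorphicOrderAt f z = ((-(k : ℤ) : ℤ) : WithTop ℤ)) : 1 ≤ poleOrder f z := by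
  simp only [poleOrder, dif_pos hf, h, WithTop.untopD_coe]
  omega

lemma order_congr'' {f g : ℂ → ℂ} {z : ℂ} (hf : MeromorphicAt f z)
    (hg : MeromorphicAt g z) (h : ∀ᶠ w in 𝓝[≠] z, f w = g w) : meromorphicOrderAt f z = meromorphicOrderAt g z := by
  rcases eq_or_ne (meromorphicOrderAt g z) ⊤ with ht | ht
  · rw [ht, meromorphicOrderAt_eq_top_iff]
    rw [meromorphicOrderAt_eq_top_iff] at ht
    filter_upwards [h, ht] with w h1 h2
    rw [h1, h2]
  · obtain ⟨n, hn⟩ := WithTop.ne_top_iff_exists.mp ht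
    rw [← hn, meromorphicOrderAt_eq_int_iff hf]
    obtain ⟨G, hG, hGz, hev⟩ := (meromorphicOrderAt_eq_int_iff (n := n) hg).mp hn.symm
    refine ⟨G, hG, hGz, ?_⟩
    filter_upwards [h, hev] with w h1 h2
    rw [h1, h2]

/-- If `l = -f⁻¹` near `z` and `f` has finite order `n` at `z`, then `l` has order `-n`. -/
lemma order_neg_inv_eq {f l : ℂ → ℂ} {z : ℂ} (hf : MeromorphicAt f z) (hl : MeromorphicAt l z)
    (hfl : ∀ᶠ w in 𝓝 z, l w = -(f w)⁻¹) {n : ℤ} (hn : meromorphicOrderAt f z = (n : WithTop ℤ)) :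
    meromorphicOrderAt l z = ((-n : ℤ) : WithTop ℤ) := by
  obtain ⟨g, hg, hgz, hev⟩ := (meromorphicOrderAt_eq_int_iff (n := n) hf).mp hn
  have hgne : ∀ᶠ w in 𝓝 z, g w ≠ 0 := hg.continuousAt.eventually_ne hgz
  rw [meromorphicOrderAt_eq_int_iff hl]
  refine ⟨fun w => -(g w)⁻¹, (hg.inv hgz).neg, neg_ne_zero.mpr (inv_ne_zero hgz), ?_⟩
  filter_upwards [hev, hfl.filter_mono nhdsWithin_le_nhds,
    hgne.filter_mono nhdsWithin_le_nhds, self_mem_nhdsWithin] with w h1 h2 h3 hw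
  have hsub : (w - z) ≠ 0 := sub_ne_zero.mpr hw
  rw [h2, h1, smul_eq_mul, smul_eq_mul, mul_inv, ← zpow_neg]
  ring

/-- Local analytic representative of a meromorphic function with no pole. -/
lemma exists_local_rep {f : ℂ → ℂ} {z : ℂ} (hf : MeromorphicAt f z) (h : poleOrder f z = 0) :
    ∃ F : ℂ → ℂ, AnalyticAt ℂ F z ∧ ∀ᶠ w in 𝓝[≠] z, f w = F w := by
  simp only [poleOrder, dif_pos hf, Int.toNat_eq_zero, neg_nonpos] at h
  rcases eq_or_ne (meromorphicOrderAt f z) ⊤ with ht | ht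
  · exact ⟨0, analyticAt_const, by simpa using meromorphicOrderAt_eq_top_iff.mp ht⟩
  · obtain ⟨n, hn⟩ := WithTop.ne_top_iff_exists.mp ht
    have hn0 : 0 ≤ n := by rw [← hn, WithTop.untopD_coe] at h; exact h
    obtain ⟨g, hg, hgz, hev⟩ := (meromorphicOrderAt_eq_int_iff (n := n) hf).mp hn.symm
    refine ⟨fun w => (w - z) ^ n.toNat * g w, ?_, ?_⟩
    · exact ((analyticAt_id.sub analyticAt_const).pow _).mul hg
    · filter_upwards [hev] with w hw
      rw [hw, smul_eq_mul, ← zpow_natCast, Int.toNat_of_nonneg hn0]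

/-- Global analytic representative of a meromorphic function with no poles on an open set. -/
lemma exists_global_rep {f : ℂ → ℂ} {s : Set ℂ} (hf : MeromorphicOn f s)
    (h : ∀ z ∈ s, poleOrder f z = 0) :
    ∃ g : ℂ → ℂ, (∀ z ∈ s, AnalyticAt ℂ g z) ∧ ∀ z ∈ s, ∀ᶠ w in 𝓝[≠] z, f w = g w := by
  classical
  set g : ℂ → ℂ := fun z => if AnalyticAt ℂ f z then f z else limUnder (𝓝[≠] z) f with hgdef
  have key : ∀ z ∈ s, AnalyticAt ℂ g z ∧ ∀ᶠ w in 𝓝[≠] z, f w = g w := by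
    intro z hz
    obtain ⟨F, hF, hev⟩ := exists_local_rep (hf z hz) (h z hz)
    have h1 : ∀ᶠ w in 𝓝 z, AnalyticAt ℂ F w := hF.eventually_analyticAt
    have h2 : ∀ᶠ w in 𝓝 z, w ≠ z → f w = F w := eventually_nhdsWithin_iff.mp hev
    obtain ⟨V, hVsub, hVo, hzV⟩ := _root_.mem_nhds_iff.mp (h1.and h2)
    have hFan : ∀ w ∈ V, AnalyticAt ℂ F w := fun w hw => (hVsub hw).1
    have hfeq : ∀ w ∈ V, w ≠ z → f w = F w := fun w hw => (hVsub hw).2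
    have hgF : ∀ w ∈ V, g w = F w := by
      intro w hw
      rcases eq_or_ne w z with rfl | hwz
      · have hT2 : Tendsto f (𝓝[≠] w) (𝓝 (F w)) := by
          refine Filter.Tendsto.congr' ?_ (hF.continuousAt.continuousWithinAt (s := {w}ᶜ))
          filter_upwards [hev] with u hu using hu.symm
        by_cases hA : AnalyticAt ℂ f w
        · have : Tendsto f (𝓝[≠] w) (𝓝 (f w)) := hA.continuousAt.continuousWithinAt
          simp only [hgdef, if_pos hA]
          exact tendsto_nhds_unique this hT2
        · simp only [hgdef, if_neg hA]
          exact hT2.limUnder_eq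
      · have hWmem : V ∩ {z}ᶜ ∈ 𝓝 w :=
          (hVo.inter isOpen_compl_singleton).mem_nhds ⟨hw, hwz⟩
        have hfw : f =ᶠ[𝓝 w] F := by
          filter_upwards [hWmem] with u hu using hfeq u hu.1 hu.2
        have hA : AnalyticAt ℂ f w := (hFan w hw).congr hfw.symm
        simp only [hgdef, if_pos hA]
        exact hfeq w hw hwz
    have hgFev : g =ᶠ[𝓝 z] F := by
      filter_upwards [hVo.mem_nhds hzV] with w hw using hgF w hw
    refine ⟨hF.congr hgFev.symm, ?_⟩
    filter_upwards [hev, hgFev.filter_mono nhdsWithin_le_nhds] with w hw1 hw2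
    rw [hw1, ← hw2]
  exact ⟨g, fun z hz => (key z hz).1, fun z hz => (key z hz).2⟩

lemma poleCount_pos_of_pole {f : ℂ → ℂ} {Uo : Set ℂ} (hf : MeromorphicOn f Uo)
    {c : ℂ} {r : ℝ} (hsub : closedBall c r ⊆ Uo) {w : ℂ} (hw : w ∈ ball c r)
    (hpw : 1 ≤ poleOrder f w) : 1 ≤ poleCount f (ball c r) := by
  have havoid : ∀ z ∈ Uo, ∀ᶠ v in 𝓝[≠] z, v ∉ Function.support (fun z => poleOrder f z) := by
    intro z hz
    filter_upwards [(hf z hz).eventually_analyticAt] with v hv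
    simp [Function.mem_support, poleOrder_eq_zero_of_analyticAt hv]
  have hfin : (ball c r ∩ Function.support fun z => poleOrder f z).Finite := by
    refine ((finite_inter_of_punctured_avoid havoid (isCompact_closedBall c r) hsub).subset ?_)
    exact fun x hx => ⟨hx.2, ball_subset_closedBall hx.1⟩
  rw [poleCount, finsum_mem_eq_sum _ hfin]
  have hwmem : w ∈ hfin.toFinset := by
    rw [Set.Finite.mem_toFinset]
    exact ⟨hw, by simp [Function.mem_support]; omega⟩
  exact le_trans hpw (Finset.single_le_sum (fun i _ => Nat.zero_le _) hwmem)

lemma exists_pole_of_poleCount_pos {f : ℂ → ℂ} {s : Set ℂ} (h : 1 ≤ poleCount f s) :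
    ∃ w ∈ s, 1 ≤ poleOrder f w := by
  by_contra hc
  push_neg at hc
  have : poleCount f s = 0 := by
    rw [poleCount]
    exact finsum_mem_eq_zero_of_forall_eq_zero fun x hx => by have := hc x hx; omega
  omega

lemma exists_good_radius {a b : ℝ} (hab : a < b) {D : Set ℂ} {μ : ℂ}
    (hD : (D ∩ closedBall μ b).Finite) :
    ∃ ρ, a < ρ ∧ ρ < b ∧ ∀ z ∈ D, dist z μ ≠ ρ := by
  have hrad : ((fun z => dist z μ) '' (D ∩ closedBall μ b)).Finite := hD.image _
  have hinf : (Set.Ioo a b \ (fun z => dist z μ) '' (D ∩ closedBall μ b)).Infinite :=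
    (Set.Ioo_infinite hab).diff hrad
  obtain ⟨ρ, hρ⟩ := hinf.nonempty
  refine ⟨ρ, hρ.1.1, hρ.1.2, fun z hz hd => ?_⟩
  exact hρ.2 ⟨z, ⟨hz, by rw [mem_closedBall, hd]; exact hρ.1.2.le⟩, hd⟩

lemma max_principle {F : ℂ → ℂ} {μ : ℂ} {ρ : ℝ} (hρ : 0 < ρ)
    (hF : ∀ z ∈ closedBall μ ρ, AnalyticAt ℂ F z) {C : ℝ}
    (hb : ∀ z ∈ sphere μ ρ, ‖F z‖ ≤ C) {w : ℂ} (hw : w ∈ closedBall μ ρ) : ‖F w‖ ≤ C := by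
  have hd : DiffContOnCl ℂ F (ball μ ρ) := by
    apply DifferentiableOn.diffContOnCl
    rw [closure_ball μ hρ.ne']
    exact fun z hz => ((hF z hz).differentiableAt).differentiableWithinAt
  refine Complex.norm_le_of_forall_mem_frontier_norm_le isBounded_ball hd ?_ ?_
  · rw [frontier_ball μ hρ.ne']
    exact hb
  · rwa [closure_ball μ hρ.ne']
/-- Theorem 4.1 (test for spectral inexactness), function-theoretic form: let `m, ℓ, mₙ, ℓₙ`
be meromorphic on a neighbourhood of a closed disc around `μ` with `m·ℓ = -1` (i.e.
`ℓ = -1/m`) and `mₙ·ℓₙ = -1`, let `m` be holomorphic at `μ` (no pole there), and let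
`mₙ → m`, `ℓₙ → ℓ` uniformly on every sufficiently small compact annulus around `μ`. Then for
every sufficiently small radius `r` and all sufficiently large `n`, if `mₙ` has a pole inside
the circle `|z - μ| = r`, then `ℓₙ` also has a pole inside it. -/
theorem spectral_inexactness_test
    (μ : ℂ) (R : ℝ) (hR : 0 < R) (U : Set ℂ) (hU : IsOpen U)
    (hD : closedBall μ R ⊆ U)
    (m ℓ : ℂ → ℂ) (mn ℓn : ℕ → ℂ → ℂ)
    (hm : MeromorphicOn m U) (hl : MeromorphicOn ℓ U)
    (hmn : ∀ n, MeromorphicOn (mn n) U) (hln : ∀ n, MeromorphicOn (ℓn n) U)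
    (hml : ∀ z ∈ U, ℓ z = -(m z)⁻¹)
    (hmln : ∀ n, ∀ z ∈ U, ℓn n z = -(mn n z)⁻¹)
    (hmμ : AnalyticAt ℂ m μ)
    (hconvm : ∀ r R' : ℝ, 0 < r → r ≤ R' → R' < R →
      TendstoUniformlyOn mn m atTop (closedBall μ R' \ ball μ r))
    (hconvl : ∀ r R' : ℝ, 0 < r → r ≤ R' → R' < R →
      TendstoUniformlyOn ℓn ℓ atTop (closedBall μ R' \ ball μ r)) :
    ∃ r₀ > 0, ∀ r : ℝ, 0 < r → r < r₀ → ∀ᶠ n in atTop,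
      1 ≤ poleCount (mn n) (ball μ r) → 1 ≤ poleCount (ℓn n) (ball μ r) := by
  rcases hmμ.eventually_eq_zero_or_eventually_ne_zero with hA | hB
  · -- Case A : m ≡ 0 near μ
    obtain ⟨ε, hε, hmz⟩ := Metric.eventually_nhds_iff.mp hA
    refine ⟨min ε R, by positivity, ?_⟩
    intro r hrpos hrlt
    have hrR : r < R := lt_of_lt_of_le hrlt (min_le_right _ _)
    have hrε : r < ε := lt_of_lt_of_le hrlt (min_le_left _ _)
    have hm2 := Metric.tendstoUniformlyOn_iff.mp
      (hconvm (r/2) r (by positivity) (by linarith) hrR) (1/2) (by norm_num)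
    have hl2 := Metric.tendstoUniformlyOn_iff.mp
      (hconvl (r/2) r (by positivity) (by linarith) hrR) (1/2) (by norm_num)
    filter_upwards [hm2, hl2] with n hmn2 hln2
    intro hpole
    have hcbU : closedBall μ r ⊆ U := fun z hz =>
      hD (closedBall_subset_closedBall hrR.le hz)
    have hm0 : ∀ z ∈ closedBall μ r, m z = 0 := fun z hz =>
      hmz (lt_of_le_of_lt (mem_closedBall.mp hz) hrε)
    have hl0 : ∀ z ∈ closedBall μ r, ℓ z = 0 := fun z hz => by
      rw [hml z (hcbU hz), hm0 z hz]; simp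
    have hann0 : ∀ z ∈ closedBall μ r \ ball μ (r/2), mn n z = 0 ∧ ℓn n z = 0 := by
      intro z hz
      have h1 : dist (m z) (mn n z) < 1/2 := hmn2 z hz
      have h2 : dist (ℓ z) (ℓn n z) < 1/2 := hln2 z hz
      rw [hm0 z hz.1, dist_comm, dist_zero_right] at h1
      rw [hl0 z hz.1, dist_comm, dist_zero_right] at h2
      have hz0 : mn n z = 0 := by
        by_contra hne
        have heq : ℓn n z = -(mn n z)⁻¹ := hmln n z (hcbU hz.1)
        rw [heq, norm_neg, norm_inv] at h2
        have hpos : (0:ℝ) < ‖mn n z‖ := norm_pos_iff.mpr hne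
        have h2' : (2:ℝ) < ‖mn n z‖⁻¹ := by
          have : ‖mn n z‖ < 2⁻¹ := by linarith
          calc (2:ℝ) = (2⁻¹:ℝ)⁻¹ := by norm_num
          _ < ‖mn n z‖⁻¹ := by
            apply inv_strictAnti₀ hpos this
        linarith
      exact ⟨hz0, by rw [hmln n z (hcbU hz.1), hz0]; simp⟩
    obtain ⟨z₀, hz₀, hp₀⟩ := exists_pole_of_poleCount_pos hpole
    have hz₀U : z₀ ∈ U := hcbU (ball_subset_closedBall hz₀)
    obtain ⟨k, hk1, hkord⟩ := order_neg_int_of_poleOrder_pos (hmn n z₀ hz₀U) hp₀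
    have hflz : ∀ᶠ w in 𝓝 z₀, ℓn n w = -(mn n w)⁻¹ := by
      filter_upwards [hU.mem_nhds hz₀U] with w hw using hmln n w hw
    have hlord : meromorphicOrderAt (ℓn n) z₀ = ((k:ℤ) : WithTop ℤ) := by
      have := order_neg_inv_eq (hmn n z₀ hz₀U) (hln n z₀ hz₀U) hflz hkord
      simpa using this
    by_contra hnopole
    have hnp : ∀ z ∈ ball μ r, poleOrder (ℓn n) z = 0 := by
      intro z hz
      by_contra hne
      exact hnopole (poleCount_pos_of_pole (hln n) hcbU hz (Nat.one_le_iff_ne_zero.mpr hne))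
    obtain ⟨g, hgan, hgrep⟩ :=
      exists_global_rep (fun x hx => hln n x (hcbU (ball_subset_closedBall hx))) hnp
    set D : Set ℂ := {z | z ∈ ball μ r ∧ ℓn n z ≠ g z} with hDdef
    have hc₁r : max (dist z₀ μ) (r/2) < r := max_lt (mem_ball.mp hz₀) (by linarith)
    set c₁ := max (dist z₀ μ) (r/2) with hc₁
    set ρ₂ := (c₁ + r)/2 with hρ₂
    have hc₁ρ₂ : c₁ < ρ₂ := by rw [hρ₂]; linarith
    have hρ₂r : ρ₂ < r := by rw [hρ₂]; linarith
    have hDfin : (D ∩ closedBall μ ρ₂).Finite := by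
      apply finite_inter_of_punctured_avoid (Uo := ball μ r) ?_ (isCompact_closedBall μ ρ₂)
        (closedBall_subset_ball hρ₂r)
      intro z hz
      filter_upwards [hgrep z hz] with w hw
      intro hwD
      exact hwD.2 hw
    obtain ⟨ρ, hρ1, hρ2, hρD⟩ := exists_good_radius hc₁ρ₂ hDfin
    have hρpos : 0 < ρ := lt_of_le_of_lt (le_trans (by positivity) (le_max_right _ _)) hρ1
    have hρr : ρ < r := hρ2.trans hρ₂r
    have hz₀ρ : dist z₀ μ < ρ := lt_of_le_of_lt (le_max_left _ _) hρ1
    have hsphere : ∀ z ∈ sphere μ ρ, g z = 0 := by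
      intro z hz
      have hdz : dist z μ = ρ := mem_sphere.mp hz
      have hzball : z ∈ ball μ r := mem_ball.mpr (by rw [hdz]; exact hρr)
      have hzann : z ∈ closedBall μ r \ ball μ (r/2) := by
        constructor
        · exact ball_subset_closedBall hzball
        · rw [mem_ball, hdz]
          push_neg
          exact le_trans (le_trans (by linarith) (le_max_right (dist z₀ μ) (r/2))) hρ1.le
      have hzero : ℓn n z = 0 := (hann0 z hzann).2
      have hnotD : z ∉ D := fun hD' => hρD z hD' hdz
      have : ℓn n z = g z := by
        by_contra hne
        exact hnotD ⟨hzball, hne⟩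
      rw [← this, hzero]
    have hganball : ∀ z ∈ closedBall μ ρ, AnalyticAt ℂ g z := fun z hz =>
      hgan z (lt_of_le_of_lt (mem_closedBall.mp hz) hρr)
    have hgzero : ∀ w ∈ closedBall μ ρ, g w = 0 := by
      intro w hw
      have := max_principle hρpos hganball (C := 0)
        (fun z hz => by rw [hsphere z hz]; simp) hw
      exact norm_le_zero_iff.mp this
    have hzeroev : ∀ᶠ w in 𝓝[≠] z₀, ℓn n w = 0 := by
      have hball : ball μ ρ ∈ 𝓝 z₀ := isOpen_ball.mem_nhds (mem_ball.mpr hz₀ρ)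
      filter_upwards [hgrep z₀ (mem_ball.mpr (hz₀ρ.trans hρr)),
        mem_nhdsWithin_of_mem_nhds hball] with w h1 h2
      rw [h1, hgzero w (ball_subset_closedBall h2)]
    have htop : meromorphicOrderAt (ℓn n) z₀ = ⊤ := meromorphicOrderAt_eq_top_iff.mpr hzeroev
    rw [hlord] at htop
    exact WithTop.coe_ne_top htop
  · -- Cases B/C : m not identically zero near μ
    have hordm : analyticOrderAt m μ ≠ ⊤ := by
      intro htop
      have h0 := analyticOrderAt_eq_top.mp htop
      obtain ⟨w, hw1, hw2⟩ := (hB.and (h0.filter_mono nhdsWithin_le_nhds)).exists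
      exact hw1 hw2
    obtain ⟨k₀, hk₀⟩ := ENat.ne_top_iff_exists.mp hordm
    obtain ⟨hfun, hhan, hhμ, hhev⟩ := (hmμ.analyticOrderAt_eq_natCast (n := k₀)).mp hk₀.symm
    have hgood : ∀ᶠ w in 𝓝 μ,
        (m w = (w - μ)^k₀ * hfun w ∧ AnalyticAt ℂ hfun w) ∧
        (hfun w ≠ 0 ∧ AnalyticAt ℂ m w) := by
      filter_upwards [hhev, hhan.eventually_analyticAt,
        hhan.continuousAt.eventually_ne hhμ, hmμ.eventually_analyticAt] with w h1 h2 h3 h4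
      exact ⟨⟨by simpa [smul_eq_mul] using h1, h2⟩, h3, h4⟩
    obtain ⟨ε, hεpos, hεp⟩ := Metric.eventually_nhds_iff.mp hgood
    refine ⟨min (min (ε/2) (R/2)) (1/2), by positivity, ?_⟩
    intro r hrpos hrlt
    have hrR : r < R := by
      have := lt_of_lt_of_le hrlt (le_trans (min_le_left _ _) (min_le_right _ _))
      linarith
    have hrε : r < ε := by
      have := lt_of_lt_of_le hrlt (le_trans (min_le_left _ _) (min_le_left _ _))
      linarith
    have hr1 : r < 1 := by
      have := lt_of_lt_of_le hrlt (min_le_right _ _)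
      linarith
    have hcbU : closedBall μ r ⊆ U := fun z hz =>
      hD (closedBall_subset_closedBall hrR.le hz)
    have hcbε : ∀ z ∈ closedBall μ r, dist z μ < ε := fun z hz =>
      lt_of_le_of_lt (mem_closedBall.mp hz) hrε
    have hμcb : μ ∈ closedBall μ r := mem_closedBall_self hrpos.le
    have hman : ∀ z ∈ closedBall μ r, AnalyticAt ℂ m z := fun z hz => (hεp (hcbε z hz)).2.2
    have hmfac : ∀ z ∈ closedBall μ r, m z = (z - μ)^k₀ * hfun z := fun z hz =>
      (hεp (hcbε z hz)).1.1
    have hhne : ∀ z ∈ closedBall μ r, hfun z ≠ 0 := fun z hz => (hεp (hcbε z hz)).2.1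
    have hhan' : ∀ z ∈ closedBall μ r, AnalyticAt ℂ hfun z := fun z hz => (hεp (hcbε z hz)).1.2
    by_cases hk : k₀ = 0
    · -- Case C : m μ ≠ 0
      subst hk
      have hmne : ∀ z ∈ closedBall μ r, m z ≠ 0 := by
        intro z hz
        rw [hmfac z hz, pow_zero, one_mul]
        exact hhne z hz
      have hmcont : ContinuousOn m (closedBall μ r) := fun z hz =>
        (hman z hz).continuousAt.continuousWithinAt
      obtain ⟨M, hM⟩ := (isCompact_closedBall μ r).exists_bound_of_continuousOn hmcont
      have hMpos : 0 < M :=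
        lt_of_lt_of_le (norm_pos_iff.mpr (hmne μ hμcb)) (hM μ hμcb)
      set c := M⁻¹ with hc
      have hcpos : 0 < c := by positivity
      have hlow : ∀ z ∈ closedBall μ r, c ≤ ‖ℓ z‖ := by
        intro z hz
        rw [hml z (hcbU hz), norm_neg, norm_inv]
        exact inv_anti₀ (norm_pos_iff.mpr (hmne z hz)) (hM z hz)
      have hlan : ∀ z ∈ closedBall μ r, AnalyticAt ℂ ℓ z := by
        intro z hz
        have han : AnalyticAt ℂ (fun w => -(m w)⁻¹) z := ((hman z hz).inv (hmne z hz)).neg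
        apply han.congr
        have hmem : U ∩ ball μ ε ∈ 𝓝 z :=
          (hU.inter isOpen_ball).mem_nhds ⟨hcbU hz, mem_ball.mpr (hcbε z hz)⟩
        filter_upwards [hmem] with w hw
        exact (hml w hw.1).symm
      have hl2 := Metric.tendstoUniformlyOn_iff.mp
        (hconvl (r/2) r (by positivity) (by linarith) hrR) (c/2) (by positivity)
      filter_upwards [hl2] with n hln2
      intro hpole
      obtain ⟨z₀, hz₀, hp₀⟩ := exists_pole_of_poleCount_pos hpole
      have hz₀U : z₀ ∈ U := hcbU (ball_subset_closedBall hz₀)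
      obtain ⟨k, hk1, hkord⟩ := order_neg_int_of_poleOrder_pos (hmn n z₀ hz₀U) hp₀
      have hflz : ∀ᶠ w in 𝓝 z₀, ℓn n w = -(mn n w)⁻¹ := by
        filter_upwards [hU.mem_nhds hz₀U] with w hw using hmln n w hw
      have hlord : meromorphicOrderAt (ℓn n) z₀ = ((k:ℤ) : WithTop ℤ) := by
        have := order_neg_inv_eq (hmn n z₀ hz₀U) (hln n z₀ hz₀U) hflz hkord
        simpa using this
      by_contra hnopole
      have hnp : ∀ z ∈ ball μ r, poleOrder (ℓn n) z = 0 := by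
        intro z hz
        by_contra hne
        exact hnopole (poleCount_pos_of_pole (hln n) hcbU hz (Nat.one_le_iff_ne_zero.mpr hne))
      obtain ⟨g, hgan, hgrep⟩ :=
        exists_global_rep (fun x hx => hln n x (hcbU (ball_subset_closedBall hx))) hnp
      -- g z₀ = 0
      obtain ⟨h₂, hh₂an, hh₂z, hev₂⟩ := (meromorphicOrderAt_eq_int_iff (n := (k:ℤ)) (hln n z₀ hz₀U)).mp hlord
      have hgz₀ : g z₀ = 0 := by
        set F₂ : ℂ → ℂ := fun w => (w - z₀)^(k:ℕ) * h₂ w with hF₂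
        have hev₂' : ∀ᶠ w in 𝓝[≠] z₀, ℓn n w = F₂ w := by
          filter_upwards [hev₂] with w hw
          simp only [hF₂]
          rw [hw, smul_eq_mul, zpow_natCast]
        have hF₂an : AnalyticAt ℂ F₂ z₀ := ((analyticAt_id.sub analyticAt_const).pow _).mul hh₂an
        have hF₂z₀ : F₂ z₀ = 0 := by
          rw [hF₂]
          simp [zero_pow (by omega : (k:ℕ) ≠ 0)]
        have T2 : Tendsto (ℓn n) (𝓝[≠] z₀) (𝓝 0) := by
          refine Filter.Tendsto.congr' (f₁ := F₂) ?_ ?_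
          · filter_upwards [hev₂'] with w hw using hw.symm
          · rw [← hF₂z₀]
            exact hF₂an.continuousAt.continuousWithinAt
        have hz₀ball : z₀ ∈ ball μ r := hz₀
        have T1 : Tendsto (ℓn n) (𝓝[≠] z₀) (𝓝 (g z₀)) := by
          refine Filter.Tendsto.congr' ?_ ((hgan z₀ hz₀ball).continuousAt.continuousWithinAt)
          filter_upwards [hgrep z₀ hz₀ball] with w hw using hw.symm
        exact tendsto_nhds_unique T1 T2
      set D : Set ℂ := {z | z ∈ ball μ r ∧ ℓn n z ≠ g z} with hDdef
      have hc₁r : max (dist z₀ μ) (r/2) < r := max_lt (mem_ball.mp hz₀) (by linarith)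
      set c₁ := max (dist z₀ μ) (r/2) with hc₁
      set ρ₂ := (c₁ + r)/2 with hρ₂
      have hc₁ρ₂ : c₁ < ρ₂ := by rw [hρ₂]; linarith
      have hρ₂r : ρ₂ < r := by rw [hρ₂]; linarith
      have hDfin : (D ∩ closedBall μ ρ₂).Finite := by
        apply finite_inter_of_punctured_avoid (Uo := ball μ r) ?_ (isCompact_closedBall μ ρ₂)
          (closedBall_subset_ball hρ₂r)
        intro z hz
        filter_upwards [hgrep z hz] with w hw
        intro hwD
        exact hwD.2 hw
      obtain ⟨ρ, hρ1, hρ2, hρD⟩ := exists_good_radius hc₁ρ₂ hDfin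
      have hρpos : 0 < ρ := lt_of_le_of_lt (le_trans (by positivity) (le_max_right _ _)) hρ1
      have hρr : ρ < r := hρ2.trans hρ₂r
      have hz₀ρ : dist z₀ μ < ρ := lt_of_le_of_lt (le_max_left _ _) hρ1
      have hsphbound : ∀ z ∈ sphere μ ρ, ‖g z - ℓ z‖ ≤ c/2 := by
        intro z hz
        have hdz : dist z μ = ρ := mem_sphere.mp hz
        have hzball : z ∈ ball μ r := mem_ball.mpr (by rw [hdz]; exact hρr)
        have hzann : z ∈ closedBall μ r \ ball μ (r/2) := by
          constructor
          · exact ball_subset_closedBall hzball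
          · rw [mem_ball, hdz]
            push_neg
            exact le_trans (le_trans (by linarith) (le_max_right (dist z₀ μ) (r/2))) hρ1.le
        have hnotD : z ∉ D := fun hD' => hρD z hD' hdz
        have heq : ℓn n z = g z := by
          by_contra hne
          exact hnotD ⟨hzball, hne⟩
        rw [← heq]
        have := hln2 z hzann
        rw [dist_comm, dist_eq_norm] at this
        exact this.le
      have hanF : ∀ z ∈ closedBall μ ρ, AnalyticAt ℂ (fun w => g w - ℓ w) z := by
        intro z hz
        have hzr : z ∈ closedBall μ r :=
          closedBall_subset_closedBall hρr.le hz
        exact (hgan z (lt_of_le_of_lt (mem_closedBall.mp hz) hρr)).sub (hlan z hzr)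
      have hfinal : ‖g z₀ - ℓ z₀‖ ≤ c/2 :=
        max_principle hρpos hanF hsphbound (mem_closedBall.mpr hz₀ρ.le)
      rw [hgz₀, zero_sub, norm_neg] at hfinal
      have := hlow z₀ (ball_subset_closedBall hz₀)
      linarith
    · -- Case B : m has a zero of order k₀ ≥ 1 at μ
      have hk₀pos : 1 ≤ k₀ := by omega
      set δ := ‖(hfun μ)⁻¹‖/2 with hδ
      have hδpos : 0 < δ := by
        have : (hfun μ)⁻¹ ≠ 0 := inv_ne_zero hhμ
        rw [hδ]
        have := norm_pos_iff.mpr this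
        linarith
      have hl2 := Metric.tendstoUniformlyOn_iff.mp
        (hconvl (r/2) r (by positivity) (by linarith) hrR) δ hδpos
      filter_upwards [hl2] with n hln2
      intro _hpole
      by_contra hnopole
      have hnp : ∀ z ∈ ball μ r, poleOrder (ℓn n) z = 0 := by
        intro z hz
        by_contra hne
        exact hnopole (poleCount_pos_of_pole (hln n) hcbU hz (Nat.one_le_iff_ne_zero.mpr hne))
      obtain ⟨g, hgan, hgrep⟩ :=
        exists_global_rep (fun x hx => hln n x (hcbU (ball_subset_closedBall hx))) hnp
      set D : Set ℂ := {z | z ∈ ball μ r ∧ ℓn n z ≠ g z} with hDdef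
      set ρ₂ := (r/2 + r)/2 with hρ₂
      have hc₁ρ₂ : r/2 < ρ₂ := by rw [hρ₂]; linarith
      have hρ₂r : ρ₂ < r := by rw [hρ₂]; linarith
      have hDfin : (D ∩ closedBall μ ρ₂).Finite := by
        apply finite_inter_of_punctured_avoid (Uo := ball μ r) ?_ (isCompact_closedBall μ ρ₂)
          (closedBall_subset_ball hρ₂r)
        intro z hz
        filter_upwards [hgrep z hz] with w hw
        intro hwD
        exact hwD.2 hw
      obtain ⟨ρ, hρ1, hρ2, hρD⟩ := exists_good_radius hc₁ρ₂ hDfin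
      have hρpos : 0 < ρ := lt_of_le_of_lt (by positivity) hρ1
      have hρr : ρ < r := hρ2.trans hρ₂r
      -- facts about the sphere
      have hsph_ball : ∀ z ∈ sphere μ ρ, z ∈ ball μ r := by
        intro z hz
        exact mem_ball.mpr (by rw [mem_sphere.mp hz]; exact hρr)
      have hsph_cb : ∀ z ∈ sphere μ ρ, z ∈ closedBall μ r := fun z hz =>
        ball_subset_closedBall (hsph_ball z hz)
      have hsph_ne : ∀ z ∈ sphere μ ρ, z ≠ μ := by
        intro z hz
        intro heq
        rw [heq] at hz
        have := mem_sphere.mp hz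
        simp at this
        linarith
      have hsph_eq : ∀ z ∈ sphere μ ρ, ℓn n z = g z := by
        intro z hz
        have hdz : dist z μ = ρ := mem_sphere.mp hz
        have hnotD : z ∉ D := fun hD' => hρD z hD' hdz
        by_contra hne
        exact hnotD ⟨hsph_ball z hz, hne⟩
      have hsph_ann : ∀ z ∈ sphere μ ρ, z ∈ closedBall μ r \ ball μ (r/2) := by
        intro z hz
        refine ⟨hsph_cb z hz, ?_⟩
        rw [mem_ball, mem_sphere.mp hz]
        push_neg
        linarith
      -- ℓ is analytic at points of the closed ball away from μ
      have hlan : ∀ z ∈ closedBall μ r, z ≠ μ → AnalyticAt ℂ ℓ z := by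
        intro z hz hzμ
        have hmz : m z ≠ 0 := by
          rw [hmfac z hz]
          exact mul_ne_zero (pow_ne_zero _ (sub_ne_zero.mpr hzμ)) (hhne z hz)
        have han : AnalyticAt ℂ (fun w => -(m w)⁻¹) z := ((hman z hz).inv hmz).neg
        apply han.congr
        have hmem : U ∩ ball μ ε ∈ 𝓝 z :=
          (hU.inter isOpen_ball).mem_nhds ⟨hcbU hz, mem_ball.mpr (hcbε z hz)⟩
        filter_upwards [hmem] with w hw
        exact (hml w hw.1).symm
      -- the three integrals
      set φ : ℂ → ℂ := fun z => (z - μ)^(k₀ - 1) with hφ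
      have hφg_an : ∀ z ∈ closedBall μ ρ, AnalyticAt ℂ (fun w => φ w * g w) z := by
        intro z hz
        have : z ∈ ball μ r := lt_of_le_of_lt (mem_closedBall.mp hz) hρr
        exact ((analyticAt_id.sub analyticAt_const).pow _).mul (hgan z this)
      have hInt1 : (∮ z in C(μ, ρ), φ z * g z) = 0 := by
        apply Complex.circleIntegral_eq_zero_of_differentiable_on_off_countable hρpos.le
          countable_empty
        · exact fun z hz => (hφg_an z hz).continuousAt.continuousWithinAt
        · intro z hz
          exact (hφg_an z (ball_subset_closedBall hz.1)).differentiableAt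
      have hFan : ∀ z ∈ closedBall μ ρ, AnalyticAt ℂ (fun w => -(hfun w)⁻¹) z := by
        intro z hz
        have hzr : z ∈ closedBall μ r := closedBall_subset_closedBall hρr.le hz
        exact ((hhan' z hzr).inv (hhne z hzr)).neg
      have hInt2 : (∮ z in C(μ, ρ), φ z * ℓ z) = (2 * Real.pi * I : ℂ) • (-(hfun μ)⁻¹) := by
        have hcongr : EqOn (fun z => φ z * ℓ z)
            (fun z => (z - μ)⁻¹ • (-(hfun z)⁻¹)) (sphere μ ρ) := by
          intro z hz
          have hzμ : z ≠ μ := hsph_ne z hz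
          have hzcb : z ∈ closedBall μ r := hsph_cb z hz
          have hsubne : z - μ ≠ 0 := sub_ne_zero.mpr hzμ
          have hℓz : ℓ z = -(m z)⁻¹ := hml z (hcbU hzcb)
          have hmz : m z = (z - μ)^k₀ * hfun z := hmfac z hzcb
          have hsplit : (z - μ)^k₀ = (z - μ)^(k₀ - 1) * (z - μ) := by
            rw [← pow_succ]
            congr 1
            omega
          simp only [hφ, smul_eq_mul]
          rw [hℓz, hmz, hsplit]
          have hhz : hfun z ≠ 0 := hhne z hzcb
          field_simp
        rw [circleIntegral.integral_congr hρpos.le hcongr]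
        have hdc : DiffContOnCl ℂ (fun w => -(hfun w)⁻¹) (ball μ ρ) := by
          apply DifferentiableOn.diffContOnCl
          rw [closure_ball μ hρpos.ne']
          exact fun z hz => (hFan z hz).differentiableAt.differentiableWithinAt
        exact hdc.circleIntegral_sub_inv_smul (mem_ball_self hρpos)
      have hint_g : CircleIntegrable (fun z => φ z * g z) μ ρ := by
        apply ContinuousOn.circleIntegrable hρpos.le
        intro z hz
        exact (hφg_an z (sphere_subset_closedBall hz)).continuousAt.continuousWithinAt
      have hint_l : CircleIntegrable (fun z => φ z * ℓ z) μ ρ := by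
        apply ContinuousOn.circleIntegrable hρpos.le
        intro z hz
        have : AnalyticAt ℂ (fun w => φ w * ℓ w) z := by
          refine ((analyticAt_id.sub analyticAt_const).pow _).mul ?_
          exact hlan z (hsph_cb z hz) (hsph_ne z hz)
        exact this.continuousAt.continuousWithinAt
      have hsub : (∮ z in C(μ, ρ), (φ z * g z - φ z * ℓ z))
          = (∮ z in C(μ, ρ), φ z * g z) - (∮ z in C(μ, ρ), φ z * ℓ z) :=
        circleIntegral.integral_sub hint_g hint_l
      have hbound : ‖∮ z in C(μ, ρ), (φ z * g z - φ z * ℓ z)‖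
          ≤ 2 * Real.pi * ρ * (ρ^(k₀ - 1) * δ) := by
        apply circleIntegral.norm_integral_le_of_norm_le_const hρpos.le
        intro z hz
        have hdz : dist z μ = ρ := mem_sphere.mp hz
        rw [← mul_sub, norm_mul]
        have hφn : ‖φ z‖ = ρ^(k₀ - 1) := by
          simp only [hφ]
          rw [norm_pow, ← dist_eq_norm, hdz]
        rw [hφn]
        apply mul_le_mul_of_nonneg_left ?_ (by positivity)
        rw [← hsph_eq z hz]
        have := hln2 z (hsph_ann z hz)
        rw [dist_comm, dist_eq_norm] at this
        exact this.le
      have hval : ‖∮ z in C(μ, ρ), (φ z * g z - φ z * ℓ z)‖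
          = 2 * Real.pi * ‖(hfun μ)⁻¹‖ := by
        rw [hsub, hInt1, hInt2, zero_sub, norm_neg, norm_smul, norm_neg]
        congr 1
        simp [map_mul,
          _root_.abs_of_nonneg Real.pi_nonneg]
      have hρk : ρ^(k₀ - 1) * ρ ≤ 1 := by
        have hρ1' : ρ ≤ 1 := by linarith
        calc ρ^(k₀-1) * ρ = ρ^k₀ := by rw [← pow_succ]; congr 1; omega
        _ ≤ 1 := pow_le_one₀ hρpos.le hρ1'
      have hπ := Real.pi_pos
      rw [hval] at hbound
      have h2 : 2 * Real.pi * ρ * (ρ^(k₀-1) * δ) ≤ 2 * Real.pi * δ := by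
        have hle : ρ * ρ^(k₀-1) ≤ 1 := by rw [mul_comm]; exact hρk
        calc 2 * Real.pi * ρ * (ρ^(k₀-1) * δ)
            = (2 * Real.pi * δ) * (ρ * ρ^(k₀-1)) := by ring
          _ ≤ (2 * Real.pi * δ) * 1 := by
              apply mul_le_mul_of_nonneg_left hle (by positivity)
          _ = 2 * Real.pi * δ := by ring
      rw [hδ] at h2 hbound
      nlinarith [norm_pos_iff.mpr (inv_ne_zero hhμ)]
end
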